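/- Let (Θ, Ω, f : Θ → Z) be a cardinal implementation problem such that f is surjective and Θ^una ∩ Θ^strict ⊆ Θ ⊆ Θ^strict. If f is UD^∞-implemented by a stochastic finite-action mechanism M = ⟨S, g⟩, then for every z ∈ Z the product set ×_{i∈I} S_i^z is nonempty and g[×_{i∈I} S_i^z] = {z}, i.e., g(s) is the degenerate lottery on z for every s ∈ ×_{i∈I} S_i^z. -/

import Mathlib

open Function

noncomputable section

/-- A lottery (probability distribution) on the finite outcome set `Z`. -/
def Lottery (Z : Type) [Fintype Z] : Type :=
  {y : Z → ℝ // (∀ z, 0 ≤ y z) ∧ ∑ z, y z = 1}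

variable {Z : Type} [Fintype Z]

/-- The degenerate lottery on the outcome `z`. -/
def Lottery.delta [DecidableEq Z] (z : Z) : Lottery Z :=
  ⟨fun z' => if z' = z then 1 else 0, fun z' => by positivity, by simp⟩

/-- Expected utility of the lottery `y` under the vN-M utility function `u`. -/
def expUtil (u : Z → ℝ) (y : Lottery Z) : ℝ := ∑ z, y.1 z * u z

variable {I : Type} [DecidableEq I] {S : I → Type}

/-- `s_i` is strictly dominated (for agent `i`, at cardinal state `u`, in the mechanism
with outcome function `g`) on the product set `×_j T j`. -/
def Dominated (u : I → Z → ℝ) (g : (∀ i, S i) → Lottery Z)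
    (T : ∀ j, Set (S j)) (i : I) (si : S i) : Prop :=
  ∃ si' : S i, ∀ s : ∀ j, S j, (∀ j, j ≠ i → s j ∈ T j) →
    expUtil (u i) (g (update s i si)) < expUtil (u i) (g (update s i si'))

/-- `UDk u g k i` is the set of strategies of agent `i` surviving `k` rounds of iterative
deletion of strictly dominated strategies at the cardinal state `u` (`UDk u g 0 i = S i`). -/
def UDk (u : I → Z → ℝ) (g : (∀ i, S i) → Lottery Z) : ℕ → ∀ i, Set (S i)
  | 0 => fun _ => Set.univ
  | (k + 1) => fun i => {si ∈ UDk u g k i | ¬ Dominated u g (UDk u g k) i si}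

/-- `UD(M,u)`: profiles surviving one round of deletion. -/
def UDoneSet (u : I → Z → ℝ) (g : (∀ i, S i) → Lottery Z) : Set (∀ i, S i) :=
  {s | ∀ i, s i ∈ UDk u g 1 i}

/-- `UD^∞(M,u)`: profiles surviving iterative deletion (all rounds `k ≥ 1`). -/
def UDinfSet (u : I → Z → ℝ) (g : (∀ i, S i) → Lottery Z) : Set (∀ i, S i) :=
  {s | ∀ i, ∀ k : ℕ, s i ∈ UDk u g (k + 1) i}

/-- `S_i^z`: strategies of agent `i` from which the degenerate outcome `z` is reachable. -/
def Sz [DecidableEq Z] (g : (∀ i, S i) → Lottery Z) (i : I) (z : Z) : Set (S i) :=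
  {si | ∃ s : ∀ j, S j, s i = si ∧ g s = Lottery.delta z}

/-- `×_j T j` satisfies the non-domination property at `u`. -/
def NonDomProp (u : I → Z → ℝ) (g : (∀ i, S i) → Lottery Z) (T : ∀ j, Set (S j)) : Prop :=
  ∀ i, ∀ si ∈ T i, ∀ si' : S i, ∃ s : ∀ j, S j, (∀ j, j ≠ i → s j ∈ T j) ∧
    expUtil (u i) (g (update s i si')) ≤ expUtil (u i) (g (update s i si))

/-- `u` is a cardinal representation of the ordinal state `θ`. -/
def Represents (u : I → Z → ℝ) (θ : I → Z → Z → Prop) : Prop :=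
  ∀ i z z', θ i z z' ↔ u i z' ≤ u i z

/-- `Θ*`: all ordinal states (complete and transitive preference profiles). -/
def ThetaStar (I Z : Type) : Set (I → Z → Z → Prop) :=
  {θ | ∀ i, (∀ z z', θ i z z' ∨ θ i z' z) ∧ Transitive (θ i)}

/-- `Θ^una`: ordinal states where all agents have identical preferences. -/
def ThetaUna (I Z : Type) : Set (I → Z → Z → Prop) :=
  {θ ∈ ThetaStar I Z | ∀ i j z z', θ i z z' ↔ θ j z z'}

/-- `Θ^strict`: ordinal states where no agent has non-trivial indifference. -/
def ThetaStrict (I Z : Type) : Set (I → Z → Z → Prop) :=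
  {θ ∈ ThetaStar I Z | ∀ i z z', θ i z z' → θ i z' z → z = z'}

/-- The strict part `≻_i^θ`. -/
def StrictPref (θ : I → Z → Z → Prop) (i : I) (z z' : Z) : Prop := θ i z z' ∧ ¬ θ i z' z

/-- Agent `i` is a dictator for `f` on `Θ`. -/
def Dictator (Θ : Set (I → Z → Z → Prop)) (f : (I → Z → Z → Prop) → Z) (i : I) : Prop :=
  ∀ θ ∈ Θ, ∀ z, z ≠ f θ → StrictPref θ i (f θ) z

/-- `(Θ, Ω)` form a cardinal implementation problem: `Θ` is a set of ordinal states, every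
member of `Ω` is a cardinal representation of some `θ ∈ Θ`, and `Ω_θ ≠ ∅` for all `θ ∈ Θ`. -/
def CIProblem (Θ : Set (I → Z → Z → Prop)) (Ω : Set (I → Z → ℝ)) : Prop :=
  Θ ⊆ ThetaStar I Z ∧ (∀ u ∈ Ω, ∃ θ ∈ Θ, Represents u θ) ∧
    ∀ θ ∈ Θ, ∃ u ∈ Ω, Represents u θ

/-- `f` is UD-implemented by the mechanism with outcome function `g`. -/
def UDImplements [DecidableEq Z] (Θ : Set (I → Z → Z → Prop)) (Ω : Set (I → Z → ℝ))
    (f : (I → Z → Z → Prop) → Z) (g : (∀ i, S i) → Lottery Z) : Prop :=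
  ∀ θ ∈ Θ, ∀ u ∈ Ω, Represents u θ → g '' UDoneSet u g = {Lottery.delta (f θ)}

/-- `f` is UD^∞-implemented by the mechanism with outcome function `g`. -/
def UDinfImplements [DecidableEq Z] (Θ : Set (I → Z → Z → Prop)) (Ω : Set (I → Z → ℝ))
    (f : (I → Z → Z → Prop) → Z) (g : (∀ i, S i) → Lottery Z) : Prop :=
  ∀ θ ∈ Θ, ∀ u ∈ Ω, Represents u θ → g '' UDinfSet u g = {Lottery.delta (f θ)}

/-- `Θ^{(i1,i2)-z}`: strict states where `z` is second-best for both `i1` and `i2`,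
whose top-ranked outcomes differ. -/
def ThetaSecond [Fintype Z] (i1 i2 : I) (z : Z) : Set (I → Z → Z → Prop) :=
  {θ ∈ ThetaStrict I Z |
    Set.ncard {z' | θ i1 z z'} = Fintype.card Z - 1 ∧
    Set.ncard {z' | θ i2 z z'} = Fintype.card Z - 1 ∧
    {z' | θ i1 z z'} ≠ {z' | θ i2 z z'}}

end

/-!
By surjectivity some `θ₀ ∈ Θ` has `f θ₀ = z`. In a finite game iterated deletion leaves a
nonempty set of profiles, and at any `u ∈ Ω_θ₀` every survivor is mapped to `z`, so it lies in
`×_i S_i^z`. Now take the unanimous strict state in which `z` is everybody's top outcome. A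
strategy in `S_i^z` earns the largest possible payoff against the profile that reaches `z`, and
that profile's other coordinates lie in `S_j^z` again; by induction on the rounds, `×_i S_i^z`
survives every round there, so `g` is constant on it (equal to the value at the survivor found
first, namely `z`).
-/

section IteratedDominance

variable {Z : Type} [Fintype Z] {I : Type} [DecidableEq I] {S : I → Type}

lemma expUtil_le_of_forall_le {u : Z → ℝ} {z : Z} (h : ∀ z', u z' ≤ u z) (y : Lottery Z) :
    expUtil u y ≤ u z :=
  calc expUtil u y = ∑ w, y.1 w * u w := rfl
    _ ≤ ∑ w, y.1 w * u z := Finset.sum_le_sum fun w _ => mul_le_mul_of_nonneg_left (h w) (y.2.1 w)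
    _ = u z := by rw [← Finset.sum_mul, y.2.2, one_mul]

lemma expUtil_delta [DecidableEq Z] (u : Z → ℝ) (z : Z) :
    expUtil u (Lottery.delta z) = u z := by
  simp [expUtil, Lottery.delta, ite_mul]

def IsBestResponse (u : I → Z → ℝ) (g : (∀ i, S i) → Lottery Z) (t : ∀ i, S i) (i : I)
    (si : S i) : Prop :=
  ∀ si', expUtil (u i) (g (update t i si')) ≤ expUtil (u i) (g (update t i si))

variable {u : I → Z → ℝ} {g : (∀ i, S i) → Lottery Z}

lemma IsBestResponse.not_dominated {T : ∀ j, Set (S j)} {t : ∀ j, S j} {i : I} {si : S i}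
    (hbr : IsBestResponse u g t i si) (ht : ∀ j, j ≠ i → t j ∈ T j) :
    ¬ Dominated u g T i si := fun ⟨si', hdom⟩ => (hdom t ht).not_ge (hbr si')

lemma exists_isBestResponse [∀ i, Finite (S i)] [∀ i, Nonempty (S i)] (t : ∀ i, S i) (i : I) :
    ∃ si, IsBestResponse u g t i si :=
  Finite.exists_max fun si => expUtil (u i) (g (update t i si))

lemma mem_UDk_iff {n : ℕ} {i : I} {si : S i} :
    si ∈ UDk u g n i ↔ ∀ m < n, ¬ Dominated u g (UDk u g m) i si := by
  induction n with
  | zero => simp [UDk]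
  | succ n ih =>
    change si ∈ UDk u g n i ∧ _ ↔ _
    rw [ih, Nat.forall_lt_succ_right]

lemma UDk_antitone : Antitone (UDk u g) :=
  antitone_nat_of_succ_le fun _ _ _ h => h.1

lemma pi_UDk_nonempty [∀ i, Finite (S i)] [∀ i, Nonempty (S i)] (k : ℕ) :
    (Set.univ.pi (UDk u g k)).Nonempty := by
  induction k with
  | zero => exact ⟨Classical.arbitrary _, fun i _ => Set.mem_univ _⟩
  | succ k ih =>
    obtain ⟨t, ht⟩ := ih
    choose s hs using exists_isBestResponse (u := u) (g := g) t
    refine ⟨s, fun i _ => mem_UDk_iff.2 fun m hm => (hs i).not_dominated fun j _ => ?_⟩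
    exact UDk_antitone (Nat.le_of_lt_succ hm) j (ht j (Set.mem_univ j))

lemma UDinfSet_eq_iInter : UDinfSet u g = ⋂ k, Set.univ.pi (UDk u g (k + 1)) := by
  ext s
  simp only [UDinfSet, Set.mem_ofPred_eq, Set.mem_iInter, Set.mem_univ_pi]
  exact forall_comm

-- The rounds of deletion stabilise because there are only finitely many sets of profiles.
lemma UDinfSet_nonempty [Finite I] [∀ i, Finite (S i)] [∀ i, Nonempty (S i)] :
    (UDinfSet u g).Nonempty := by
  have hanti : Antitone fun k => Set.univ.pi (UDk u g k) :=
    fun _ _ hkm => Set.pi_mono fun i _ => UDk_antitone hkm i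
  obtain ⟨n, hn⟩ := WellFoundedLT.antitone_chain_condition hanti
  obtain ⟨s, hs⟩ := pi_UDk_nonempty (u := u) (g := g) n
  rw [UDinfSet_eq_iInter]
  refine ⟨s, Set.mem_iInter.2 fun k => ?_⟩
  rcases le_total (k + 1) n with hk | hk
  · exact hanti hk hs
  · exact hn (k + 1) hk ▸ hs

lemma Sz_subset_UDk [DecidableEq Z] {z : Z} (htop : ∀ i z', u i z' ≤ u i z) (k : ℕ) (i : I) :
    Sz g i z ⊆ UDk u g k i := by
  induction k generalizing i with
  | zero => exact fun _ _ => Set.mem_univ _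
  | succ k ih =>
    rintro _ ⟨s, rfl, hgs⟩
    have hbr : IsBestResponse u g s i (s i) := fun _ => by
      rw [update_eq_self, hgs, expUtil_delta]
      exact expUtil_le_of_forall_le (htop i) _
    exact ⟨ih i ⟨s, rfl, hgs⟩, hbr.not_dominated fun j _ => ih j ⟨s, rfl, hgs⟩⟩

lemma UDinfImplements.apply_eq_delta [DecidableEq Z] {Θ : Set (I → Z → Z → Prop)}
    {Ω : Set (I → Z → ℝ)} {f : (I → Z → Z → Prop) → Z} (himp : UDinfImplements Θ Ω f g)
    {θ : I → Z → Z → Prop} (hθ : θ ∈ Θ) (hu : u ∈ Ω) (hrep : Represents u θ) {s : ∀ i, S i}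
    (hs : s ∈ UDinfSet u g) : g s = Lottery.delta (f θ) :=
  (himp θ hθ u hu hrep).subset ⟨s, hs, rfl⟩

end IteratedDominance

section OrdinalStates

variable {I Z : Type}

lemma mem_ThetaUna_inter_ThetaStrict_of_injective {α : Type} [LinearOrder α] {v : Z → α}
    (hv : Injective v) : (fun (_ : I) a b => v b ≤ v a) ∈ ThetaUna I Z ∩ ThetaStrict I Z := by
  have hstar : (fun (_ : I) a b => v b ≤ v a) ∈ ThetaStar I Z :=
    fun _ => ⟨fun _ _ => le_total _ _, fun _ _ _ hab hbc => hbc.trans hab⟩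
  exact ⟨⟨hstar, fun _ _ _ _ => Iff.rfl⟩, hstar, fun _ _ _ h₁ h₂ => hv (h₂.antisymm h₁)⟩

lemma exists_injective_forall_le_apply [Fintype Z] [DecidableEq Z] (z : Z) :
    ∃ v : Z → ℕ, Injective v ∧ ∀ z', v z' ≤ v z := by
  let v : Z → ℕ := fun z' => if z' = z then Fintype.card Z else Fintype.equivFin Z z'
  have hlt : ∀ z', z' ≠ z → v z' < v z := fun z' h => by simp [v, h]
  refine ⟨v, fun a b hab => ?_, fun z' => ?_⟩
  · by_cases ha : a = z <;> by_cases hb : b = z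
    · rw [ha, hb]
    · exact absurd hab (ha ▸ (hlt b hb).ne')
    · exact absurd hab (hb ▸ (hlt a ha).ne)
    · exact (Fintype.equivFin Z).injective (Fin.val_injective (by simpa [v, ha, hb] using hab))
  · by_cases h : z' = z
    · rw [h]
    · exact (hlt z' h).le

end OrdinalStates

theorem image_of_Sz_product_UDinf_general
    {I Z : Type} [Fintype I] [Fintype Z] [DecidableEq I] [DecidableEq Z]
    (Θ : Set (I → Z → Z → Prop)) (Ω : Set (I → Z → ℝ)) (f : (I → Z → Z → Prop) → Z)
    (hCIP : CIProblem Θ Ω)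
    (hsurj : ∀ z : Z, ∃ θ ∈ Θ, f θ = z)
    (hsub1 : ThetaUna I Z ∩ ThetaStrict I Z ⊆ Θ)
    (S : I → Type) (hfin : ∀ i, Finite (S i)) (hne : ∀ i, Nonempty (S i))
    (g : (∀ i, S i) → Lottery Z) (himp : UDinfImplements Θ Ω f g) :
    ∀ z : Z, {s : ∀ i, S i | ∀ i, s i ∈ Sz g i z}.Nonempty ∧
      ∀ s ∈ {s : ∀ i, S i | ∀ i, s i ∈ Sz g i z}, g s = Lottery.delta z := by
  intro z
  obtain ⟨θ₀, hθ₀, rfl⟩ := hsurj z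
  obtain ⟨u₀, hu₀, hrep₀⟩ := hCIP.2.2 θ₀ hθ₀
  obtain ⟨s₀, hs₀⟩ := UDinfSet_nonempty (u := u₀) (g := g)
  have hs₀Sz : ∀ i, s₀ i ∈ Sz g i (f θ₀) :=
    fun i => ⟨s₀, rfl, himp.apply_eq_delta hθ₀ hu₀ hrep₀ hs₀⟩
  obtain ⟨v, hv, hv_top⟩ := exists_injective_forall_le_apply (f θ₀)
  have hθ := hsub1 (mem_ThetaUna_inter_ThetaStrict_of_injective (I := I) hv)
  obtain ⟨u, hu, hrep⟩ := hCIP.2.2 _ hθ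
  have hSz_UDinf : ∀ s : ∀ i, S i, (∀ i, s i ∈ Sz g i (f θ₀)) → s ∈ UDinfSet u g :=
    fun s hs i k => Sz_subset_UDk (fun i z' => (hrep i _ z').1 (hv_top z')) (k + 1) i (hs i)
  refine ⟨⟨s₀, hs₀Sz⟩, fun s hs => ?_⟩
  rw [himp.apply_eq_delta hθ hu hrep (hSz_UDinf s hs),
    ← himp.apply_eq_delta hθ hu hrep (hSz_UDinf s₀ hs₀Sz), himp.apply_eq_delta hθ₀ hu₀ hrep₀ hs₀]

/-- **Lemma 3 (Xiong).** If `f` is UD^∞-implemented by a stochastic finite-action mechanism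
`⟨S, g⟩`, then for every outcome `z`, the product set `×_i S_i^z` is nonempty and
`g[×_i S_i^z] = {z}`. -/
theorem image_of_Sz_product_UDinf
    {I Z : Type} [Fintype I] [Fintype Z] [DecidableEq I] [DecidableEq Z]
    (hI : 2 ≤ Fintype.card I) (hZ : 2 ≤ Fintype.card Z)
    (Θ : Set (I → Z → Z → Prop)) (Ω : Set (I → Z → ℝ)) (f : (I → Z → Z → Prop) → Z)
    (hCIP : CIProblem Θ Ω)
    (hsurj : ∀ z : Z, ∃ θ ∈ Θ, f θ = z)
    (hsub1 : ThetaUna I Z ∩ ThetaStrict I Z ⊆ Θ) (hsub2 : Θ ⊆ ThetaStrict I Z)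
    (S : I → Type) (hfin : ∀ i, Finite (S i)) (hne : ∀ i, Nonempty (S i))
    (g : (∀ i, S i) → Lottery Z) (himp : UDinfImplements Θ Ω f g) :
    ∀ z : Z, {s : ∀ i, S i | ∀ i, s i ∈ Sz g i z}.Nonempty ∧
      ∀ s ∈ {s : ∀ i, S i | ∀ i, s i ∈ Sz g i z}, g s = Lottery.delta z :=
  image_of_Sz_product_UDinf_general Θ Ω f hCIP hsurj hsub1 S hfin hne g himp
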